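/- Annihilator construction (Section 2, kernel identity). Let U, V be finite-dimensional real inner product spaces and let B ∈ Lin(U,V) be injective. Define M := det(B*B)·id_V − B ∘ adj(B*B) ∘ B* ∈ Lin(V,V), where B* is the adjoint of B and adj denotes the adjugate (transpose of the cofactor matrix) of a linear endomorphism of U. Then ker M = im B. (Applied to B = 𝔹(ξ) for an elliptic symbol 𝔹, this shows the 2kd-homogeneous operator 𝒜 with symbol 𝔸(ξ) = det(𝔹(ξ)*𝔹(ξ)) id_V − 𝔹(ξ) ∘ adj(𝔹(ξ)*𝔹(ξ)) ∘ 𝔹(ξ)* satisfies im 𝔹(ξ) = ker 𝔸(ξ) for all ξ ≠ 0, hence 𝒜 ∘ ℬ = 0.) -/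

import Mathlib

open LinearMap

/- If `N ∘ (g ∘ f) = d • id` with `d` a unit, then `d⁻¹ • N ∘ g` is a left inverse of `f`, so
`f ∘ N ∘ g` acts as `d • id` exactly on `range f`; for `f = B`, `g = B*` the hypothesis is the
defining identity of the adjugate, and `d = det (B*B)` is nonzero because `ker (B*B) = ker B = 0`. -/

theorem LinearMap.ker_smul_id_sub_comp_eq_range {R M M' : Type*} [CommRing R]
    [AddCommGroup M] [Module R M] [AddCommGroup M'] [Module R M']
    (f : M →ₗ[R] M') (g : M' →ₗ[R] M) (N : M →ₗ[R] M) {d : R} (hd : IsUnit d)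
    (hN : N ∘ₗ g ∘ₗ f = d • LinearMap.id) :
    ker (d • LinearMap.id - f ∘ₗ N ∘ₗ g) = range f := by
  ext v
  simp only [mem_ker, sub_apply, smul_apply, id_apply, comp_apply, sub_eq_zero, mem_range]
  constructor
  · intro hv
    refine ⟨(↑hd.unit⁻¹ : R) • N (g v), ?_⟩
    rw [map_smul, ← hv, smul_smul, hd.val_inv_mul, one_smul]
  · rintro ⟨u, rfl⟩
    have hNu : N (g (f u)) = d • u := by simpa using LinearMap.congr_fun hN u
    rw [hNu, map_smul]

theorem LinearMap.det_adjoint_comp_self_ne_zero {𝕜 E F : Type*} [RCLike 𝕜]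
    [NormedAddCommGroup E] [InnerProductSpace 𝕜 E] [FiniteDimensional 𝕜 E]
    [NormedAddCommGroup F] [InnerProductSpace 𝕜 F] [FiniteDimensional 𝕜 F]
    {A : E →ₗ[𝕜] F} (hA : Function.Injective A) : (adjoint A ∘ₗ A).det ≠ 0 := by
  rw [Ne, det_eq_zero_iff_ker_ne_bot, ker_adjoint_comp_self, ker_eq_bot.mpr hA, not_not]

theorem annihilator_kernel_identity_general
    {U V : Type*} [NormedAddCommGroup U] [InnerProductSpace ℝ U] [FiniteDimensional ℝ U]
    [NormedAddCommGroup V] [InnerProductSpace ℝ V] [FiniteDimensional ℝ V]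
    (B : U →ₗ[ℝ] V) (hB : Function.Injective B)
    (N : U →ₗ[ℝ] U)
    (hN₁ : N ∘ₗ (LinearMap.adjoint B ∘ₗ B) =
      (LinearMap.det (LinearMap.adjoint B ∘ₗ B)) • (LinearMap.id : U →ₗ[ℝ] U)) :
    LinearMap.ker ((LinearMap.det (LinearMap.adjoint B ∘ₗ B)) • (LinearMap.id : V →ₗ[ℝ] V) -
        B ∘ₗ N ∘ₗ LinearMap.adjoint B) =
      LinearMap.range B :=
  ker_smul_id_sub_comp_eq_range B (adjoint B) N
    (det_adjoint_comp_self_ne_zero hB).isUnit hN₁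

/-- **Annihilator construction** (Section 2, kernel identity). Let `B : U → V` be an
injective linear map between finite-dimensional real inner product spaces and let
`N = adj(B*B)` be the adjugate of `B*B`, characterized by
`N ∘ (B*B) = (B*B) ∘ N = det(B*B) • id` (which determines `N` uniquely since `B*B`
is invertible). Then the map `M = det(B*B) • id_V − B ∘ N ∘ B*` satisfies
`ker M = im B`. -/
theorem annihilator_kernel_identity
    {U V : Type*} [NormedAddCommGroup U] [InnerProductSpace ℝ U] [FiniteDimensional ℝ U]
    [NormedAddCommGroup V] [InnerProductSpace ℝ V] [FiniteDimensional ℝ V]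
    (B : U →ₗ[ℝ] V) (hB : Function.Injective B)
    (N : U →ₗ[ℝ] U)
    (hN₁ : N ∘ₗ (LinearMap.adjoint B ∘ₗ B) =
      (LinearMap.det (LinearMap.adjoint B ∘ₗ B)) • (LinearMap.id : U →ₗ[ℝ] U))
    (hN₂ : (LinearMap.adjoint B ∘ₗ B) ∘ₗ N =
      (LinearMap.det (LinearMap.adjoint B ∘ₗ B)) • (LinearMap.id : U →ₗ[ℝ] U)) :
    LinearMap.ker ((LinearMap.det (LinearMap.adjoint B ∘ₗ B)) • (LinearMap.id : V →ₗ[ℝ] V) -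
        B ∘ₗ N ∘ₗ LinearMap.adjoint B) =
      LinearMap.range B :=
  annihilator_kernel_identity_general B hB N hN₁
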